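/- Let G = {z ∈ ℂ : Im z > 0, −1/2 ≤ Re z < 1/2, |z| ≥ 1} and let τ ∈ G, with L_τ = {m + k·τ : m, k ∈ ℤ}. There exist g ∈ ℂ and λ ∈ ℂ such that g ∉ L_τ, 3·g ∈ L_τ, and λ·L_τ = L_τ + ℤ·g (i.e. the elliptic curve E = ℂ/L_τ admits a cyclic subgroup C of order 3 with E/C ≅ E) if and only if τ² = −2, or τ² = −3, or τ² = −τ − 1, or τ² = −τ − 3. In particular, there are exactly 4 elliptic curves over ℂ, up to isomorphism, admitting a cyclic subgroup C of order 3 with E/C ≅ E. -/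

import Mathlib

/-!
If `λ L = L + ℤg` with `3g ∈ L`, then `μ = 1/λ` and `3λ` both map `L = ℤ + ℤτ` into itself, so they
act on `L` by integer matrices, whose determinants are `|μ|²` and `|3λ|²`, with product 9.
Determinant 1 would make `λ` itself preserve `L`, forcing `g ∈ L`; determinant 9 would put `L/3`
inside `L + ℤg`, whose quotient by `L` is cyclic of order 3. So `|μ|² = 3`: writing `μ = a + bτ`,
`μτ = c + dτ` with `ad - bc = 3` gives `bτ² = (d - a)τ + c`, and `|Re τ| ≤ 1/2`, `|τ| ≥ 1` leave
only finitely many `(b, d - a, c)`, which give the four equations. Conversely, for each of the four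
`τ` one can take `g = λ = 1/μ` with `μ = 1 + τ, -τ, 1 + 2τ, -1 - τ` respectively.
-/
noncomputable section

/-- The lattice `ℤ + ℤτ` as a subset of `ℂ`. -/
def latt (τ : ℂ) : Set ℂ := {z | ∃ m k : ℤ, z = (m : ℂ) + (k : ℂ) * τ}

/-- The additive subgroup of `ℂ` generated by the lattice `ℤ + ℤτ` and a point `g`. -/
def lattAdj (τ g : ℂ) : Set ℂ := {z | ∃ m k l : ℤ, z = (m : ℂ) + (k : ℂ) * τ + (l : ℂ) * g}

open Complex

section Lattice

variable {τ : ℂ}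

theorem one_mem_latt : (1 : ℂ) ∈ latt τ := ⟨1, 0, by simp⟩

theorem self_mem_latt : τ ∈ latt τ := ⟨0, 1, by simp⟩

theorem latt_subset_lattAdj (g : ℂ) : latt τ ⊆ lattAdj τ g := by
  rintro _ ⟨m, k, rfl⟩
  exact ⟨m, k, 0, by simp⟩

theorem self_mem_lattAdj (g : ℂ) : g ∈ lattAdj τ g := ⟨0, 0, 1, by simp⟩

theorem three_mul_mem_latt_of_mem_lattAdj {g z : ℂ} (hg : 3 * g ∈ latt τ)
    (hz : z ∈ lattAdj τ g) : 3 * z ∈ latt τ := by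
  obtain ⟨p, q, hpq⟩ := hg
  obtain ⟨m, k, l, rfl⟩ := hz
  exact ⟨3 * m + l * p, 3 * k + l * q, by push_cast; linear_combination (l : ℂ) * hpq⟩

theorem sq_eq_two_re_mul_sub_normSq (τ : ℂ) : τ ^ 2 = 2 * τ.re * τ - normSq τ := by
  apply Complex.ext <;> simp [sq, normSq_apply] <;> ring

theorem real_coeffs_eq_zero (hτ : τ.im ≠ 0) {r s : ℝ} (h : (r : ℂ) + s * τ = 0) :
    r = 0 ∧ s = 0 := by
  have hre := congrArg re h
  have him := congrArg im h
  simp only [add_re, add_im, ofReal_re, ofReal_im, mul_re, mul_im, zero_re, zero_im] at hre him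
  have hs : s = 0 := by simpa [hτ] using him
  exact ⟨by simpa [hs] using hre, hs⟩

theorem int_coeffs_eq_zero (hτ : τ.im ≠ 0) {p q : ℤ} (h : (p : ℂ) + q * τ = 0) :
    p = 0 ∧ q = 0 := by
  have := real_coeffs_eq_zero hτ (r := p) (s := q) (by exact_mod_cast h)
  exact_mod_cast this

theorem coeff_relations (hτ : τ.im ≠ 0) {a b c d : ℤ} (h : (a + b * τ) * τ = c + d * τ) :
    (d : ℝ) = a + 2 * b * τ.re ∧ (c : ℝ) = -b * normSq τ := by
  obtain ⟨hc, hd⟩ := real_coeffs_eq_zero hτ (r := c + b * normSq τ) (s := d - a - 2 * b * τ.re)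
    (by push_cast; linear_combination -h + (b : ℂ) * sq_eq_two_re_mul_sub_normSq τ)
  constructor <;> linarith

end Lattice

def IsMultiplier (τ μ : ℂ) : Prop := ∀ z ∈ latt τ, μ * z ∈ latt τ

section Multiplier

variable {τ μ : ℂ}

theorem isMultiplier_of_mem (h₁ : μ ∈ latt τ) (hτ : μ * τ ∈ latt τ) : IsMultiplier τ μ := by
  obtain ⟨a, b, ha⟩ := h₁
  obtain ⟨c, d, hc⟩ := hτ
  rintro _ ⟨m, k, rfl⟩
  exact ⟨m * a + k * c, m * b + k * d, by push_cast; linear_combination (m : ℂ) * ha + (k : ℂ) * hc⟩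

theorem IsMultiplier.exists_coeffs (hμ : IsMultiplier τ μ) :
    ∃ a b c d : ℤ, μ = a + b * τ ∧ (a + b * τ) * τ = c + d * τ := by
  obtain ⟨a, b, ha⟩ := hμ 1 one_mem_latt
  obtain ⟨c, d, hc⟩ := hμ τ self_mem_latt
  rw [mul_one] at ha
  exact ⟨a, b, c, d, ha, ha ▸ hc⟩

theorem normSq_eq_det (hτ : τ.im ≠ 0) {a b c d : ℤ} (h : (a + b * τ) * τ = c + d * τ) :
    normSq (a + b * τ) = a * d - b * c := by
  obtain ⟨hd, hc⟩ := coeff_relations hτ h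
  rw [hd, hc, normSq_apply, normSq_apply]
  simp only [add_re, add_im, mul_re, mul_im, intCast_re, intCast_im]
  ring

theorem IsMultiplier.exists_normSq_eq (hτ : τ.im ≠ 0) (hμ : IsMultiplier τ μ) :
    ∃ k : ℤ, normSq μ = k := by
  obtain ⟨a, b, c, d, rfl, h⟩ := hμ.exists_coeffs
  exact ⟨a * d - b * c, by rw [normSq_eq_det hτ h]; push_cast; ring⟩

theorem IsMultiplier.inv (hτ : τ.im ≠ 0) (hμ : IsMultiplier τ μ) (h : normSq μ = 1) :
    IsMultiplier τ μ⁻¹ := by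
  obtain ⟨a, b, c, d, rfl, hrel⟩ := hμ.exists_coeffs
  have hdet : (a * d - b * c : ℂ) = 1 := by exact_mod_cast (normSq_eq_det hτ hrel).symm.trans h
  -- the adjugate of the matrix of `μ` in the basis `1, τ`
  have hinv : (a + b * τ)⁻¹ = d - b * τ :=
    inv_eq_of_mul_eq_one_right (by linear_combination -b * hrel + hdet)
  rw [hinv]
  exact isMultiplier_of_mem ⟨d, -b, by push_cast; ring⟩
    ⟨-c, a, by push_cast; linear_combination -hrel⟩

end Multiplier

-- `lattAdj τ g / latt τ` is cyclic of order 3, whereas `1/3` and `τ/3` generate `(ℤ/3)²`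
-- modulo `latt τ`.
theorem not_third_mem_lattAdj {τ g : ℂ} (hτ : τ.im ≠ 0) (hg : 3 * g ∈ latt τ) :
    ¬ (1 / 3 ∈ lattAdj τ g ∧ τ / 3 ∈ lattAdj τ g) := by
  rintro ⟨⟨m, k, l, h₁⟩, ⟨m', k', l', hτ₃⟩⟩
  obtain ⟨p, q, hpq⟩ := hg
  obtain ⟨e₁, e₂⟩ := int_coeffs_eq_zero hτ (p := 3 * m + l * p - 1) (q := 3 * k + l * q)
    (by push_cast; linear_combination -3 * h₁ - (l : ℂ) * hpq)
  obtain ⟨e₃, e₄⟩ := int_coeffs_eq_zero hτ (p := 3 * m' + l' * p) (q := 3 * k' + l' * q - 1)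
    (by push_cast; linear_combination -3 * hτ₃ - (l' : ℂ) * hpq)
  have hlp : l * p = 1 - 3 * m := by linarith
  have hlq : l * q = -3 * k := by linarith
  have hlp' : l' * p = -3 * m' := by linarith
  have hlq' : l' * q = 1 - 3 * k' := by linarith
  have hdet : (1 - 3 * m) * (1 - 3 * k') = (-3 * k) * (-3 * m') := by
    rw [← hlp, ← hlq, ← hlp', ← hlq']
    ring
  have : (3 : ℤ) ∣ 1 := ⟨m + k' - 3 * m * k' + 3 * k * m', by linear_combination hdet⟩
  omega

theorem Int.eq_one_or_three_or_nine_of_mul_eq_nine {m k : ℤ} (hm : 0 ≤ m) (h : m * k = 9) :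
    m = 1 ∨ m = 3 ∨ m = 9 := by
  have : m ≤ 9 := Int.le_of_dvd (by norm_num) ⟨k, h.symm⟩
  interval_cases m <;> omega

-- `(b, e, f)` are the coefficients of `bτ² = eτ - f`, normalised by `|Re τ| ≤ 1/2` and `|τ| ≥ 1`.
theorem det_eq_three_cases {a b e f : ℤ} (he₁ : -b ≤ e) (he₂ : e < b) (hf : b ≤ f)
    (h : a ^ 2 + a * e + b * f = 3) :
    (b = 1 ∧ e = 0 ∧ f = 2) ∨ (b = 1 ∧ e = 0 ∧ f = 3) ∨ (b = 1 ∧ e = -1 ∧ f = 1) ∨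
      (b = 1 ∧ e = -1 ∧ f = 3) ∨ (b = 2 ∧ e = -2 ∧ f = 2) := by
  -- `(2a + e)² + (4bf - e²) = 12` and `4bf - e² ≥ 3b²`
  have hb₀ : 0 < b := by omega
  have hb : b ≤ 2 := by nlinarith [sq_nonneg (2 * a + e)]
  have ha : (2 * a + e) ^ 2 ≤ 12 := by nlinarith
  have ha₁ : -2 ≤ a := by nlinarith
  have ha₂ : a ≤ 2 := by nlinarith
  interval_cases b <;> interval_cases e <;> interval_cases a <;> omega

theorem sq_eq_of_det_eq_three {τ : ℂ} (hτ : τ.im ≠ 0) (hre₁ : -(1 / 2) ≤ τ.re)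
    (hre₂ : τ.re < 1 / 2) (hn : 1 ≤ normSq τ) {a b c d : ℤ}
    (hrel : (a + b * τ) * τ = c + d * τ) (hdet : a * d - b * c = 3) :
    τ ^ 2 = -2 ∨ τ ^ 2 = -3 ∨ τ ^ 2 = -τ - 1 ∨ τ ^ 2 = -τ - 3 := by
  wlog hb : 0 ≤ b generalizing a b c d
  · exact this (a := -a) (b := -b) (c := -c) (d := -d) (by push_cast; linear_combination -hrel)
      (by linear_combination hdet) (by omega)
  obtain ⟨hd, hc⟩ := coeff_relations hτ hrel
  obtain ⟨e, rfl⟩ : ∃ e, d = a + e := ⟨d - a, by ring⟩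
  obtain ⟨f, rfl⟩ : ∃ f, c = -f := ⟨-c, by ring⟩
  push_cast at hd hc
  rcases hb.eq_or_lt with rfl | hb
  · have he : e = 0 := by exact_mod_cast (by simpa using hd : (e : ℝ) = 0)
    have hf : f = 0 := by exact_mod_cast (by simpa using hc : (f : ℝ) = 0)
    subst he hf
    have ha₁ : -1 ≤ a := by nlinarith
    have ha₂ : a ≤ 1 := by nlinarith
    interval_cases a <;> omega
  have hbR : (0 : ℝ) < b := by exact_mod_cast hb
  have he₁ : -b ≤ e := by exact_mod_cast (by nlinarith : (-b : ℝ) ≤ e)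
  have he₂ : e < b := by exact_mod_cast (by nlinarith : (e : ℝ) < b)
  have hf : b ≤ f := by exact_mod_cast (by nlinarith : (b : ℝ) ≤ f)
  rcases det_eq_three_cases (a := a) he₁ he₂ hf (by linear_combination hdet) with
    ⟨rfl, rfl, rfl⟩ | ⟨rfl, rfl, rfl⟩ | ⟨rfl, rfl, rfl⟩ | ⟨rfl, rfl, rfl⟩ | ⟨rfl, rfl, rfl⟩ <;>
    push_cast at hrel
  · exact Or.inl (by linear_combination hrel)
  · exact Or.inr (Or.inl (by linear_combination hrel))
  · exact Or.inr (Or.inr (Or.inl (by linear_combination hrel)))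
  · exact Or.inr (Or.inr (Or.inr (by linear_combination hrel)))
  · exact Or.inr (Or.inr (Or.inl (by linear_combination hrel / 2)))

section Isogeny

variable {τ g lam : ℂ}

theorem mul_mem_lattAdj (H : (fun x => lam * x) '' latt τ = lattAdj τ g) {z : ℂ}
    (hz : z ∈ latt τ) : lam * z ∈ lattAdj τ g :=
  H ▸ ⟨z, hz, rfl⟩

theorem exists_isMultiplier_mul_eq_one (H : (fun x => lam * x) '' latt τ = lattAdj τ g) :
    ∃ μ, IsMultiplier τ μ ∧ lam * μ = 1 := by
  obtain ⟨μ, hμ, hlamμ : lam * μ = 1⟩ : (1 : ℂ) ∈ (fun x => lam * x) '' latt τ :=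
    H ▸ latt_subset_lattAdj g one_mem_latt
  obtain ⟨w, hw, hlamw : lam * w = τ⟩ : τ ∈ (fun x => lam * x) '' latt τ :=
    H ▸ latt_subset_lattAdj g self_mem_latt
  have hw' : w = μ * τ :=
    mul_left_cancel₀ (left_ne_zero_of_mul_eq_one hlamμ) (by rw [hlamw, ← mul_assoc, hlamμ, one_mul])
  exact ⟨μ, isMultiplier_of_mem hμ (hw' ▸ hw), hlamμ⟩

theorem isMultiplier_three_mul (hg : 3 * g ∈ latt τ)
    (H : (fun x => lam * x) '' latt τ = lattAdj τ g) : IsMultiplier τ (3 * lam) := by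
  refine isMultiplier_of_mem ?_ ?_
  · simpa using three_mul_mem_latt_of_mem_lattAdj hg (mul_mem_lattAdj H one_mem_latt)
  · rw [mul_assoc]
    exact three_mul_mem_latt_of_mem_lattAdj hg (mul_mem_lattAdj H self_mem_latt)

theorem not_isMultiplier_of_image_eq (hg : g ∉ latt τ)
    (H : (fun x => lam * x) '' latt τ = lattAdj τ g) :
    ¬ IsMultiplier τ lam := fun hlam => by
  obtain ⟨w, hw, rfl⟩ : g ∈ (fun x => lam * x) '' latt τ := H ▸ self_mem_lattAdj g
  exact hg (hlam w hw)

theorem sq_eq_of_image_mul_latt_eq_lattAdj (hτ : τ.im ≠ 0) (hre₁ : -(1 / 2) ≤ τ.re)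
    (hre₂ : τ.re < 1 / 2) (hn : 1 ≤ normSq τ) (hg : g ∉ latt τ) (h3g : 3 * g ∈ latt τ)
    (H : (fun x => lam * x) '' latt τ = lattAdj τ g) :
    τ ^ 2 = -2 ∨ τ ^ 2 = -3 ∨ τ ^ 2 = -τ - 1 ∨ τ ^ 2 = -τ - 3 := by
  obtain ⟨μ, hμ, hlamμ⟩ := exists_isMultiplier_mul_eq_one H
  have h3lam := isMultiplier_three_mul h3g H
  obtain ⟨a, b, c, d, rfl, hrel⟩ := hμ.exists_coeffs
  obtain ⟨k, hk⟩ := h3lam.exists_normSq_eq hτ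
  have hdet := normSq_eq_det hτ hrel
  have hprod : (a * d - b * c) * k = 9 := by
    have : normSq (a + b * τ) * normSq (3 * lam) = 9 := by
      rw [← normSq_mul, show (a + b * τ) * (3 * lam) = 3 by linear_combination 3 * hlamμ]
      norm_num
    rw [hdet, hk] at this
    exact_mod_cast this
  have hdet₀ : 0 ≤ a * d - b * c := by exact_mod_cast hdet ▸ normSq_nonneg _
  rcases Int.eq_one_or_three_or_nine_of_mul_eq_nine hdet₀ hprod with h1 | h3 | h9
  · refine absurd ?_ (not_isMultiplier_of_image_eq hg H)
    rw [eq_inv_of_mul_eq_one_left hlamμ]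
    exact hμ.inv hτ (by rw [hdet]; exact_mod_cast h1)
  · exact sq_eq_of_det_eq_three hτ hre₁ hre₂ hn hrel h3
  · have hν := h3lam.inv hτ (by rw [hk]; exact_mod_cast (by rw [h9] at hprod; omega : k = 1))
    have hlam : lam ≠ 0 := left_ne_zero_of_mul_eq_one hlamμ
    refine absurd ⟨?_, ?_⟩ (not_third_mem_lattAdj hτ h3g)
    · convert mul_mem_lattAdj H (hν 1 one_mem_latt) using 1
      field_simp
    · convert mul_mem_lattAdj H (hν τ self_mem_latt) using 1
      field_simp

theorem div_three_not_mem_latt (hτ : τ.im ≠ 0) {p q : ℤ} (h : ¬ (3 ∣ p ∧ 3 ∣ q)) :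
    (p + q * τ) / 3 ∉ latt τ := by
  rintro ⟨m, k, hmk⟩
  obtain ⟨hp, hq⟩ := int_coeffs_eq_zero hτ (p := p - 3 * m) (q := q - 3 * k)
    (by push_cast; linear_combination 3 * hmk)
  exact h ⟨⟨m, by omega⟩, ⟨k, by omega⟩⟩

theorem image_mul_latt_eq_lattAdj_self {μ : ℂ} (hμ : IsMultiplier τ μ) (hlamμ : lam * μ = 1)
    (hlamτ : lam * τ ∈ lattAdj τ lam) : (fun x => lam * x) '' latt τ = lattAdj τ lam := by
  obtain ⟨m', k', l', hτ'⟩ := hlamτ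
  ext z
  constructor
  · rintro ⟨_, ⟨m, k, rfl⟩, rfl⟩
    exact ⟨k * m', k * k', m + k * l', by push_cast; linear_combination (k : ℂ) * hτ'⟩
  · rintro ⟨m, k, l, rfl⟩
    obtain ⟨a, b, ha⟩ := hμ 1 one_mem_latt
    obtain ⟨c, d, hc⟩ := hμ τ self_mem_latt
    refine ⟨(m * a + k * c + l : ℤ) + (m * b + k * d : ℤ) * τ, ⟨_, _, rfl⟩, ?_⟩
    push_cast
    linear_combination -(lam * m) * ha - (lam * k) * hc + (m + k * τ) * hlamμ

theorem exists_selfIsogeny_of_isMultiplier (hτ : τ.im ≠ 0) {p q : ℤ} (hpq : ¬ (3 ∣ p ∧ 3 ∣ q))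
    {μ : ℂ} (hμ : IsMultiplier τ μ) (hμ₃ : (p + q * τ) * μ = 3)
    (hτ₃ : (p + q * τ) / 3 * τ ∈ lattAdj τ ((p + q * τ) / 3)) :
    ∃ g lam : ℂ, g ∉ latt τ ∧ (3 : ℂ) * g ∈ latt τ ∧
      (fun x => lam * x) '' latt τ = lattAdj τ g :=
  ⟨(p + q * τ) / 3, (p + q * τ) / 3, div_three_not_mem_latt hτ hpq, ⟨p, q, by ring⟩,
    image_mul_latt_eq_lattAdj_self hμ (by linear_combination hμ₃ / 3) hτ₃⟩

theorem exists_selfIsogeny_of_sq_eq (hτ : τ.im ≠ 0)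
    (h : τ ^ 2 = -2 ∨ τ ^ 2 = -3 ∨ τ ^ 2 = -τ - 1 ∨ τ ^ 2 = -τ - 3) :
    ∃ g lam : ℂ, g ∉ latt τ ∧ (3 : ℂ) * g ∈ latt τ ∧
      (fun x => lam * x) '' latt τ = lattAdj τ g := by
  rcases h with h | h | h | h
  · exact exists_selfIsogeny_of_isMultiplier hτ (p := 1) (q := -1) (μ := 1 + τ) (by decide)
      (isMultiplier_of_mem ⟨1, 1, by push_cast; ring⟩ ⟨-2, 1, by push_cast; linear_combination h⟩)
      (by push_cast; linear_combination -h) ⟨1, 0, -1, by push_cast; linear_combination -h / 3⟩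
  · exact exists_selfIsogeny_of_isMultiplier hτ (p := 0) (q := 1) (μ := -τ) (by decide)
      (isMultiplier_of_mem ⟨0, -1, by push_cast; ring⟩ ⟨3, 0, by push_cast; linear_combination -h⟩)
      (by push_cast; linear_combination -h) ⟨-1, 0, 0, by push_cast; linear_combination h / 3⟩
  · exact exists_selfIsogeny_of_isMultiplier hτ (p := -1) (q := -2) (μ := 1 + 2 * τ) (by decide)
      (isMultiplier_of_mem ⟨1, 2, by push_cast; ring⟩
        ⟨-2, -1, by push_cast; linear_combination 2 * h⟩)
      (by push_cast; linear_combination -4 * h)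
      ⟨1, 1, 1, by push_cast; linear_combination -2 * h / 3⟩
  · exact exists_selfIsogeny_of_isMultiplier hτ (p := 0) (q := 1) (μ := -1 - τ) (by decide)
      (isMultiplier_of_mem ⟨-1, -1, by push_cast; ring⟩ ⟨3, 0, by push_cast; linear_combination -h⟩)
      (by push_cast; linear_combination -h) ⟨-1, 0, -1, by push_cast; linear_combination h / 3⟩

end Isogeny

theorem stmt_17 (τ : ℂ) (him : 0 < τ.im) (hre₁ : -(1 / 2) ≤ τ.re) (hre₂ : τ.re < 1 / 2)
    (habs : 1 ≤ ‖τ‖) :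
    (∃ g lam : ℂ, g ∉ latt τ ∧ (3 : ℂ) * g ∈ latt τ ∧
        (fun x => lam * x) '' latt τ = lattAdj τ g) ↔
    (τ ^ 2 = -2 ∨ τ ^ 2 = -3 ∨ τ ^ 2 = -τ - 1 ∨ τ ^ 2 = -τ - 3) := by
  have hn : 1 ≤ normSq τ := by simpa [Complex.sq_norm] using one_le_pow₀ (n := 2) habs
  exact ⟨fun ⟨_, _, hg, h3g, H⟩ =>
    sq_eq_of_image_mul_latt_eq_lattAdj him.ne' hre₁ hre₂ hn hg h3g H,
    exists_selfIsogeny_of_sq_eq him.ne'⟩
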